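/- Let P = e_1…e_k be a path given by its arc sequence. Then the family of intervals {[i, s̄(i)] : 1 ≤ i ≤ k} is laminar, and likewise the family {[s̲(i), i] : 1 ≤ i ≤ k} is laminar: any two intervals in the family are either disjoint or one contains the other. -/

import Mathlib

open Finset

namespace EV

noncomputable section

/-- Charge after traversing `i` arcs of a path with arc gains `g`, battery capacity `B`,
initial charge `b`. -/
def charge (B b : ℝ) (g : ℕ → ℝ) : ℕ → ℝ
  | 0 => b
  | i + 1 => min (charge B b g i + g i) B

/-- The traversal of the path with `n` arcs is feasible from initial charge `b`. -/
def Feasible (B b : ℝ) (g : ℕ → ℝ) (n : ℕ) : Prop :=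
  ∀ i < n, 0 ≤ charge B b g i + g i

open Classical in
/-- Maximum final charge `α_b(P)` for a path `P` with `n` arc gains `g`,
as an extended real (`⊥ = -∞` if the traversal is infeasible). -/
def alpha (B b : ℝ) (g : ℕ → ℝ) (n : ℕ) : EReal :=
  if Feasible B b g n then ((charge B b g n : ℝ) : EReal) else ⊥

/-- Gain of the `i`-th vertex (0-indexed): the sum of the first `i` arc gains. -/
def vGain (g : ℕ → ℝ) (i : ℕ) : ℝ := ∑ t ∈ Finset.range i, g t

/-- `P` is traversable: `α_B(P) ≥ 0`, i.e. feasible from a full battery. -/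
def Traversable (B : ℝ) (g : ℕ → ℝ) (n : ℕ) : Prop := Feasible B B g n

/-- `C` is a charge drop schedule for a path with `n` arcs (vertices `0,…,n`):
no drop at the first vertex, all drops nonnegative. -/
def Schedule (C : ℕ → ℝ) (n : ℕ) : Prop := C 0 = 0 ∧ ∀ i ≤ n, 0 ≤ C i

/-- Gain of vertex `i` with respect to the charge drop schedule `C`. -/
def cGain (g C : ℕ → ℝ) (i : ℕ) : ℝ := vGain g i - ∑ t ∈ Finset.range (i + 1), C t

/-- `P` (with `n` arcs) is ascending with respect to the schedule `C`. -/
def AscendingC (B : ℝ) (g C : ℕ → ℝ) (n : ℕ) : Prop :=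
  Traversable B g n ∧ ∀ i ≤ n, 0 ≤ cGain g C i ∧ cGain g C i ≤ cGain g C n

/-- `P` (with `n` arcs) is descending with respect to the schedule `C`. -/
def DescendingC (B : ℝ) (g C : ℕ → ℝ) (n : ℕ) : Prop :=
  Traversable B g n ∧ ∀ i ≤ n, cGain g C n ≤ cGain g C i ∧ cGain g C i ≤ 0

/-- `P` is monotone with respect to the schedule `C`. -/
def MonotoneC (B : ℝ) (g C : ℕ → ℝ) (n : ℕ) : Prop :=
  AscendingC B g C n ∨ DescendingC B g C n

/-- Ascending with respect to the zero schedule. -/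
def Ascending (B : ℝ) (g : ℕ → ℝ) (n : ℕ) : Prop := AscendingC B g (fun _ => 0) n

/-- Descending with respect to the zero schedule. -/
def Descending (B : ℝ) (g : ℕ → ℝ) (n : ℕ) : Prop := DescendingC B g (fun _ => 0) n

/-- Monotone with respect to the zero schedule. -/
def MonotonePath (B : ℝ) (g : ℕ → ℝ) (n : ℕ) : Prop := Ascending B g n ∨ Descending B g n

/-- The contiguous subpath whose arcs start at arc index `a`. -/
def SubPath (g : ℕ → ℝ) (a : ℕ) : ℕ → ℝ := fun t => g (a + t)

/-- Restriction of a charge drop schedule to the subpath starting at vertex `a`: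
no drop at the subpath's first vertex. -/
def restrict (C : ℕ → ℝ) (a : ℕ) : ℕ → ℝ := fun t => if t = 0 then 0 else C (a + t)

/-- First-arc-bounded with respect to a schedule `C` (no drop at the second vertex,
and all vertex gains lie between the gains of the first two vertices). -/
def FirstArcBoundedC (g C : ℕ → ℝ) (n : ℕ) : Prop :=
  C 1 = 0 ∧
    ((0 ≤ g 0 ∧ ∀ i ≤ n, 0 ≤ cGain g C i ∧ cGain g C i ≤ g 0) ∨
     (g 0 ≤ 0 ∧ ∀ i ≤ n, g 0 ≤ cGain g C i ∧ cGain g C i ≤ 0))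

/-- Last-arc-bounded with respect to a schedule `C` (no drops at the last two vertices,
and all vertex gains lie between the gains of the last two vertices). -/
def LastArcBoundedC (g C : ℕ → ℝ) (n : ℕ) : Prop :=
  C (n - 1) = 0 ∧ C n = 0 ∧
    ((0 ≤ g (n - 1) ∧ ∀ i ≤ n, cGain g C (n - 1) ≤ cGain g C i ∧ cGain g C i ≤ cGain g C n) ∨
     (g (n - 1) < 0 ∧ ∀ i ≤ n, cGain g C n ≤ cGain g C i ∧ cGain g C i ≤ cGain g C (n - 1)))

/-- First-arc-bounded (zero schedule). -/
def FirstArcBounded (g : ℕ → ℝ) (n : ℕ) : Prop := FirstArcBoundedC g (fun _ => 0) n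

/-- Last-arc-bounded (zero schedule). -/
def LastArcBounded (g : ℕ → ℝ) (n : ℕ) : Prop := LastArcBoundedC g (fun _ => 0) n

/-- Arc-bounded: first- or last-arc-bounded. -/
def ArcBounded (g : ℕ → ℝ) (n : ℕ) : Prop := FirstArcBounded g n ∨ LastArcBounded g n

/-- A funnel: arc-bounded and containing no monotone subpath of 2 or 3 consecutive arcs. -/
def Funnel (B : ℝ) (g : ℕ → ℝ) (n : ℕ) : Prop :=
  ArcBounded g n ∧ ∀ a m, (m = 2 ∨ m = 3) → a + m ≤ n → ¬ MonotonePath B (SubPath g a) m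

/-- `j = s̄(i)`: the maximal index `j ≥ i` (among arcs of a path with `n` arcs) such that
the subpath of arcs `i,…,j` is first-arc-bounded. -/
def IsSbar (g : ℕ → ℝ) (n i j : ℕ) : Prop :=
  i ≤ j ∧ j < n ∧ FirstArcBounded (SubPath g i) (j - i + 1) ∧
    ∀ j', i ≤ j' → j' < n → FirstArcBounded (SubPath g i) (j' - i + 1) → j' ≤ j

/-- `j = s̲(i)`: the minimal index `j ≤ i` such that the subpath of arcs `j,…,i`
is last-arc-bounded. -/
def IsSlow (g : ℕ → ℝ) (n i j : ℕ) : Prop :=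
  j ≤ i ∧ i < n ∧ LastArcBounded (SubPath g j) (i - j + 1) ∧
    ∀ j', j' ≤ i → LastArcBounded (SubPath g j') (i - j' + 1) → j ≤ j'

/-- Arc gains of the walk around a cycle with `m` arc gains `g`, starting at vertex `a`. -/
def cyc (g : ℕ → ℝ) (m a : ℕ) : ℕ → ℝ := fun t => g ((a + t) % m)

/-- A walk of length `ℓ` from `x` to `y` in the directed graph with arc relation `A`. -/
def IsWalk {V : Type*} (A : V → V → Prop) (w : ℕ → V) (ℓ : ℕ) (x y : V) : Prop :=
  w 0 = x ∧ w ℓ = y ∧ ∀ t < ℓ, A (w t) (w (t + 1))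

/-- The sequence of arc gains induced by a walk `w` in a graph with gain function `g`. -/
def walkGains {V : Type*} (g : V → V → ℝ) (w : ℕ → V) : ℕ → ℝ :=
  fun t => g (w t) (w (t + 1))

end

end EV

/-!
First- and last-arc-boundedness both say that every vertex gain of the subpath lies in the
closed interval spanned by the gains of one fixed pair of consecutive vertices (the first two,
resp. the last two). If `[i₁, s̄(i₁)]` and `[i₂, s̄(i₂)]` overlap with `i₁ ≤ i₂`, the first two
vertices of the second subpath lie on the first one, so the interval of the second is contained
in that of the first; the first subpath therefore stays first-arc-bounded up to `s̄(i₂)`, and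
maximality gives `s̄(i₂) ≤ s̄(i₁)`. The same argument, read backwards, applies to `s̲`. Intervals
of integers that never cross in this way are pairwise disjoint or nested.
-/

theorem Set.Icc_inter_eq_empty_or_subset_of_not_cross {α : Type*} [LinearOrder α]
    {a₁ b₁ a₂ b₂ : α} (h₁₂ : ¬(a₁ < a₂ ∧ a₂ ≤ b₁ ∧ b₁ < b₂))
    (h₂₁ : ¬(a₂ < a₁ ∧ a₁ ≤ b₂ ∧ b₂ < b₁)) :
    Set.Icc a₁ b₁ ∩ Set.Icc a₂ b₂ = ∅ ∨
      Set.Icc a₁ b₁ ⊆ Set.Icc a₂ b₂ ∨ Set.Icc a₂ b₂ ⊆ Set.Icc a₁ b₁ := by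
  simp only [Set.eq_empty_iff_forall_notMem, Set.subset_def, Set.mem_inter_iff, Set.mem_Icc]
  by_contra! h
  obtain ⟨⟨x, hx₁, hx₂⟩, ⟨y, hy₁, hy₂⟩, ⟨z, hz₁, hz₂⟩⟩ := h
  grind

theorem Set.MapsTo.union_of_uIcc {ι α : Type*} [Lattice α] {f : ι → α} {s t : Set ι}
    {a b : α} {x y : ι} (hs : Set.MapsTo f s (Set.uIcc a b))
    (ht : Set.MapsTo f t (Set.uIcc (f x) (f y))) (hx : x ∈ s) (hy : y ∈ s) :
    Set.MapsTo f (s ∪ t) (Set.uIcc a b) :=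
  hs.union (ht.mono_right (Set.uIcc_subset_uIcc (hs hx) (hs hy)))

namespace EV

theorem vGain_succ (g : ℕ → ℝ) (i : ℕ) : vGain g (i + 1) = vGain g i + g i :=
  Finset.sum_range_succ g i

theorem vGain_subPath (g : ℕ → ℝ) (a t : ℕ) :
    vGain (SubPath g a) t = vGain g (a + t) - vGain g a := by
  simp only [vGain, SubPath, Finset.sum_range_add, add_sub_cancel_left]

theorem cGain_zero (g : ℕ → ℝ) : cGain g (fun _ => 0) = vGain g := by
  ext; simp [cGain]

theorem firstArcBounded_iff (h : ℕ → ℝ) (m : ℕ) :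
    FirstArcBounded h m ↔ ∀ t ≤ m, vGain h t ∈ Set.uIcc (vGain h 0) (vGain h 1) := by
  have h0 : vGain h 0 = 0 := by simp [vGain]
  have h1 : vGain h 1 = h 0 := by simp [vGain]
  simp only [FirstArcBounded, FirstArcBoundedC, cGain_zero, h0, h1, true_and]
  rcases le_or_gt 0 (h 0) with hle | hlt
  · simp only [Set.uIcc_of_le hle, Set.mem_Icc, hle, true_and]
    constructor
    · rintro (H | ⟨hle', H⟩) t ht
      · exact H t ht
      · have := H t ht; constructor <;> linarith
    · exact Or.inl
  · simp [hlt.le, hlt.not_ge]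

theorem lastArcBounded_iff (h : ℕ → ℝ) {m : ℕ} (hm : 0 < m) :
    LastArcBounded h m ↔ ∀ t ≤ m, vGain h t ∈ Set.uIcc (vGain h (m - 1)) (vGain h m) := by
  have hlast : h (m - 1) = vGain h m - vGain h (m - 1) := by
    rw [← Nat.sub_add_cancel hm, vGain_succ]; simp
  simp only [LastArcBounded, LastArcBoundedC, cGain_zero, hlast, sub_nonneg, sub_neg, true_and]
  rcases le_or_gt (vGain h (m - 1)) (vGain h m) with hle | hlt
  · simp [hle, hle.not_gt]
  · simp [Set.uIcc_of_gt hlt, hlt, hlt.not_ge]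

theorem forall_vGain_subPath_mem_uIcc_iff (g : ℕ → ℝ) (a m p q : ℕ) :
    (∀ t ≤ m, vGain (SubPath g a) t ∈
        Set.uIcc (vGain (SubPath g a) p) (vGain (SubPath g a) q)) ↔
      Set.MapsTo (vGain g) (Set.Icc a (a + m))
        (Set.uIcc (vGain g (a + p)) (vGain g (a + q))) := by
  simp only [Set.MapsTo, Set.mem_Icc, vGain_subPath, Set.mem_uIcc, sub_le_sub_iff_right]
  constructor
  · rintro H r ⟨har, hra⟩
    simpa [Nat.add_sub_cancel' har] using H (r - a) (by omega)
  · exact fun H t ht => H ⟨Nat.le_add_right a t, by omega⟩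

theorem firstArcBounded_subPath_iff (g : ℕ → ℝ) {i j : ℕ} (hij : i ≤ j) :
    FirstArcBounded (SubPath g i) (j - i + 1) ↔
      Set.MapsTo (vGain g) (Set.Icc i (j + 1)) (Set.uIcc (vGain g i) (vGain g (i + 1))) := by
  rw [firstArcBounded_iff, forall_vGain_subPath_mem_uIcc_iff, add_zero,
    show i + (j - i + 1) = j + 1 by omega]

theorem lastArcBounded_subPath_iff (g : ℕ → ℝ) {i j : ℕ} (hji : j ≤ i) :
    LastArcBounded (SubPath g j) (i - j + 1) ↔
      Set.MapsTo (vGain g) (Set.Icc j (i + 1)) (Set.uIcc (vGain g i) (vGain g (i + 1))) := by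
  rw [lastArcBounded_iff _ (Nat.succ_pos _), forall_vGain_subPath_mem_uIcc_iff,
    show j + (i - j + 1 - 1) = i by omega, show j + (i - j + 1) = i + 1 by omega]

theorem IsSbar.le_of_mem_Icc {g : ℕ → ℝ} {n i₁ j₁ i₂ j₂ : ℕ} (h₁ : IsSbar g n i₁ j₁)
    (h₂ : IsSbar g n i₂ j₂) (hi : i₂ ∈ Set.Icc i₁ j₁) : j₂ ≤ j₁ := by
  obtain ⟨hi₁, hi₂⟩ := hi
  obtain ⟨hij₁, hj₁, F₁, hmax₁⟩ := h₁
  obtain ⟨hij₂, hj₂, F₂, -⟩ := h₂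
  rw [firstArcBounded_subPath_iff g hij₁] at F₁
  rw [firstArcBounded_subPath_iff g hij₂] at F₂
  have F := Set.MapsTo.union_of_uIcc F₁ F₂ ⟨hi₁, by omega⟩ ⟨by omega, by omega⟩
  refine le_of_max_le_right (hmax₁ (max j₁ j₂) (by omega) (by omega) ?_)
  rw [firstArcBounded_subPath_iff g (by omega)]
  exact F.mono_left fun r hr => by simp only [Set.mem_union, Set.mem_Icc] at hr ⊢; omega

theorem IsSlow.le_of_mem_Icc {g : ℕ → ℝ} {n i₁ j₁ i₂ j₂ : ℕ} (h₁ : IsSlow g n i₁ j₁)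
    (h₂ : IsSlow g n i₂ j₂) (hi : i₁ ∈ Set.Icc j₂ i₂) : j₂ ≤ j₁ := by
  obtain ⟨hi₁, hi₂⟩ := hi
  obtain ⟨hji₁, -, L₁, -⟩ := h₁
  obtain ⟨hji₂, -, L₂, hmin₂⟩ := h₂
  rw [lastArcBounded_subPath_iff g hji₁] at L₁
  rw [lastArcBounded_subPath_iff g hji₂] at L₂
  have L := Set.MapsTo.union_of_uIcc L₂ L₁ ⟨hi₁, by omega⟩ ⟨by omega, by omega⟩
  refine (le_min_iff.mp (hmin₂ (min j₁ j₂) (by omega) ?_)).1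
  rw [lastArcBounded_subPath_iff g (by omega)]
  exact L.mono_left fun r hr => by simp only [Set.mem_union, Set.mem_Icc] at hr ⊢; omega

/-- For a path given by its arc sequence `e_0 … e_{n-1}`, the family of
intervals `[i, s̄(i)]` is laminar, and the family `[s̲(i), i]` is laminar: any two members
are disjoint or nested. -/
theorem laminar_intervals (g : ℕ → ℝ) (n : ℕ) :
    (∀ i₁ j₁ i₂ j₂, IsSbar g n i₁ j₁ → IsSbar g n i₂ j₂ →
      (Set.Icc i₁ j₁ ∩ Set.Icc i₂ j₂ = ∅ ∨
        Set.Icc i₁ j₁ ⊆ Set.Icc i₂ j₂ ∨ Set.Icc i₂ j₂ ⊆ Set.Icc i₁ j₁)) ∧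
    (∀ i₁ j₁ i₂ j₂, IsSlow g n i₁ j₁ → IsSlow g n i₂ j₂ →
      (Set.Icc j₁ i₁ ∩ Set.Icc j₂ i₂ = ∅ ∨
        Set.Icc j₁ i₁ ⊆ Set.Icc j₂ i₂ ∨ Set.Icc j₂ i₂ ⊆ Set.Icc j₁ i₁)) := by
  constructor
  · intro i₁ j₁ i₂ j₂ h₁ h₂
    refine Set.Icc_inter_eq_empty_or_subset_of_not_cross ?_ ?_
    · rintro ⟨hi, hij, hj⟩
      exact hj.not_ge (h₁.le_of_mem_Icc h₂ ⟨hi.le, hij⟩)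
    · rintro ⟨hi, hij, hj⟩
      exact hj.not_ge (h₂.le_of_mem_Icc h₁ ⟨hi.le, hij⟩)
  · intro i₁ j₁ i₂ j₂ h₁ h₂
    refine Set.Icc_inter_eq_empty_or_subset_of_not_cross ?_ ?_
    · rintro ⟨hj, hji, hi⟩
      exact hj.not_ge (h₁.le_of_mem_Icc h₂ ⟨hji, hi.le⟩)
    · rintro ⟨hj, hji, hi⟩
      exact hj.not_ge (h₂.le_of_mem_Icc h₁ ⟨hji, hi.le⟩)

end EV
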